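/- Let p_0 = (B⁰, i⁰, j⁰) ∈ 𝕄, let R > 0, and let g = (g_k) be a tuple of invertible self-adjoint complex matrices (g_k† = g_k) such that g_{in(h)} B⁰_h g_{out(h)}^{−1} = B⁰_h for all h ∈ Ω, R·g_{out(h)} B⁰_{h̄} g_{in(h)}^{−1} = B⁰_{h̄} for all h ∈ Ω, g_k i⁰_k = i⁰_k, and R·j⁰_k g_k^{−1} = j⁰_k for all k. Suppose A = (A,I,J) ∈ 𝕄 satisfies μ_ℂ(p_0 + A) = 0 and l_{p_0}^*(A) = 0. Define A_R = g·(A_h, I_k, R·A_{h̄}, R·J_k) ∈ 𝕄, i.e. the result of applying the gauge action of g after multiplying the Ω̄-components A_{h̄} and the j-components J_k by R. Then μ_ℂ(p_0 + A_R) = 0 and l_{p_0}^*(A_R) = 0. -/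
import Mathlib


open Matrix Filter Topology

namespace QuiverCL

noncomputable section

variable {n : ℕ} {E : Type*}

/-- Cast a matrix along equalities of vertices. -/
def castM2 (v : Fin n → ℕ) {a b a' b' : Fin n} (ea : a = a') (eb : b = b')
    (M : Matrix (Fin (v a)) (Fin (v b)) ℂ) : Matrix (Fin (v a')) (Fin (v b')) ℂ :=
  Matrix.reindex (finCongr (congrArg v ea)) (finCongr (congrArg v eb)) M

/-- The quiver representation space `𝕄`: a triple `(B, i, j)` of families of matrices,
`B h : V (src h) → V (tgt h)`, `i k : W k → V k`, `j k : V k → W k`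
(matrices act on column vectors, so `Hom(V_a, V_b)` is `Matrix (Fin (v b)) (Fin (v a)) ℂ`). -/
abbrev Rep (src tgt : E → Fin n) (v w : Fin n → ℕ) : Type _ :=
  (∀ h : E, Matrix (Fin (v (tgt h))) (Fin (v (src h))) ℂ)
  × (∀ k : Fin n, Matrix (Fin (v k)) (Fin (w k)) ℂ)
  × (∀ k : Fin n, Matrix (Fin (w k)) (Fin (v k)) ℂ)

/-- `ε(h) = 1` for `h ∈ Ω` and `ε(h) = -1` for `h ∈ Ω̄`. -/
def eps (Ω : E → Prop) [DecidablePred Ω] (h : E) : ℂ := if Ω h then 1 else -1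

/-- The matrix `B_{h̄}` attached to the reversed edge, recast so that it is a matrix
`V (tgt h) → V (src h)`. -/
def Bbar (src tgt : E → Fin n) (bar : E → E) (v w : Fin n → ℕ)
    (hbs : ∀ h, src (bar h) = tgt h) (hbt : ∀ h, tgt (bar h) = src h)
    (p : Rep src tgt v w) (h : E) : Matrix (Fin (v (src h))) (Fin (v (tgt h))) ℂ :=
  castM2 v (hbt h) (hbs h) (p.1 (bar h))

/-- The real moment map, componentwise:
`μ_ℝ(B,i,j)_k = (i/2)·[Σ_{in(h)=k} (B_h B_h† − B_{h̄}† B_{h̄}) + i_k i_k† − j_k† j_k]`. -/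
def muR [Fintype E] (src tgt : E → Fin n) (bar : E → E) (v w : Fin n → ℕ)
    (hbs : ∀ h, src (bar h) = tgt h) (hbt : ∀ h, tgt (bar h) = src h)
    (p : Rep src tgt v w) (k : Fin n) : Matrix (Fin (v k)) (Fin (v k)) ℂ :=
  (Complex.I / 2) •
    ((∑ h : E, if e : tgt h = k then
        castM2 v e e
          (p.1 h * (p.1 h)ᴴ -
            (Bbar src tgt bar v w hbs hbt p h)ᴴ * Bbar src tgt bar v w hbs hbt p h)
      else 0)
      + (p.2.1 k * (p.2.1 k)ᴴ - (p.2.2 k)ᴴ * p.2.2 k))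

/-- The complex moment map, componentwise:
`μ_ℂ(B,i,j)_k = Σ_{in(h)=k} ε(h)·B_h B_{h̄} + i_k j_k`. -/
def muC [Fintype E] (src tgt : E → Fin n) (bar : E → E) (Ω : E → Prop) [DecidablePred Ω]
    (v w : Fin n → ℕ)
    (hbs : ∀ h, src (bar h) = tgt h) (hbt : ∀ h, tgt (bar h) = src h)
    (p : Rep src tgt v w) (k : Fin n) : Matrix (Fin (v k)) (Fin (v k)) ℂ :=
  (∑ h : E, if e : tgt h = k then
      eps Ω h • castM2 v e e (p.1 h * Bbar src tgt bar v w hbs hbt p h)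
    else 0)
    + p.2.1 k * p.2.2 k

/-- The hyperkähler rotation `HK_ξ(B,i,j) = (B_h − ε(h)·ξ·B_{h̄}†, i_k − ξ·j_k†, j_k + ξ·i_k†)`. -/
def HK (src tgt : E → Fin n) (bar : E → E) (Ω : E → Prop) [DecidablePred Ω]
    (v w : Fin n → ℕ)
    (hbs : ∀ h, src (bar h) = tgt h) (hbt : ∀ h, tgt (bar h) = src h)
    (ξ : ℂ) (p : Rep src tgt v w) : Rep src tgt v w :=
  ⟨fun h => p.1 h - (eps Ω h * ξ) • (Bbar src tgt bar v w hbs hbt p h)ᴴ,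
   fun k => p.2.1 k - ξ • (p.2.2 k)ᴴ,
   fun k => p.2.2 k + ξ • (p.2.1 k)ᴴ⟩

/-- The gauge action `g·(B,i,j) = (g_{in(h)} B_h g_{out(h)}⁻¹, g_k i_k, j_k g_k⁻¹)`. -/
def gauge (src tgt : E → Fin n) (v w : Fin n → ℕ)
    (g : ∀ k : Fin n, Matrix (Fin (v k)) (Fin (v k)) ℂ) (p : Rep src tgt v w) :
    Rep src tgt v w :=
  ⟨fun h => g (tgt h) * p.1 h * (g (src h))⁻¹,
   fun k => g k * p.2.1 k,
   fun k => p.2.2 k * (g k)⁻¹⟩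

/-- The infinitesimal gauge action `l_p(ξ) = (ξ_{in(h)} B_h − B_h ξ_{out(h)}, ξ_k i_k, −j_k ξ_k)`. -/
def lp (src tgt : E → Fin n) (v w : Fin n → ℕ)
    (p : Rep src tgt v w) (ξ : ∀ k : Fin n, Matrix (Fin (v k)) (Fin (v k)) ℂ) :
    Rep src tgt v w :=
  ⟨fun h => ξ (tgt h) * p.1 h - p.1 h * ξ (src h),
   fun k => ξ k * p.2.1 k,
   fun k => -(p.2.2 k * ξ k)⟩

/-- The adjoint of the infinitesimal gauge action, componentwise:
`l_p^*(q)_k = Σ_{in(h)=k} (A_h B_h† − B_{h̄}† A_{h̄}) + I_k i_k† − j_k† J_k`. -/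
def lpStar [Fintype E] (src tgt : E → Fin n) (bar : E → E) (v w : Fin n → ℕ)
    (hbs : ∀ h, src (bar h) = tgt h) (hbt : ∀ h, tgt (bar h) = src h)
    (p q : Rep src tgt v w) (k : Fin n) : Matrix (Fin (v k)) (Fin (v k)) ℂ :=
  (∑ h : E, if e : tgt h = k then
      castM2 v e e
        (q.1 h * (p.1 h)ᴴ -
          (Bbar src tgt bar v w hbs hbt p h)ᴴ * Bbar src tgt bar v w hbs hbt q h)
    else 0)
    + (q.2.1 k * (p.2.1 k)ᴴ - (p.2.2 k)ᴴ * q.2.2 k)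

/-- The hermitian inner product
`⟨q, q′⟩ = Σ_h Tr(A_h A′_h†) + Σ_k Tr(I_k I′_k†) + Σ_k Tr(J_k J′_k†)` on `𝕄`. -/
def innerRep [Fintype E] (src tgt : E → Fin n) (v w : Fin n → ℕ)
    (q q' : Rep src tgt v w) : ℂ :=
  (∑ h : E, (q.1 h * (q'.1 h)ᴴ).trace)
    + (∑ k : Fin n, (q.2.1 k * (q'.2.1 k)ᴴ).trace)
    + (∑ k : Fin n, (q.2.2 k * (q'.2.2 k)ᴴ).trace)

/-- The complex symplectic form
`ω_ℂ(q, q′) = Σ_h ε(h)·Tr(A_h A′_{h̄}) + Σ_k Tr(I_k J′_k − I′_k J_k)`. -/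
def omegaC [Fintype E] (src tgt : E → Fin n) (bar : E → E) (Ω : E → Prop) [DecidablePred Ω]
    (v w : Fin n → ℕ)
    (hbs : ∀ h, src (bar h) = tgt h) (hbt : ∀ h, tgt (bar h) = src h)
    (q q' : Rep src tgt v w) : ℂ :=
  (∑ h : E, eps Ω h * (q.1 h * Bbar src tgt bar v w hbs hbt q' h).trace)
    + ∑ k : Fin n, ((q.2.1 k * q'.2.2 k).trace - (q'.2.1 k * q.2.2 k).trace)

/-- The scaling action `t∘(B,i,j)`: multiply the `Ω̄`-components and the `j`-components by `t`. -/
def scale (src tgt : E → Fin n) (Ω : E → Prop) [DecidablePred Ω] (v w : Fin n → ℕ)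
    (t : ℂ) (p : Rep src tgt v w) : Rep src tgt v w :=
  ⟨fun h => if Ω h then p.1 h else t • p.1 h,
   fun k => p.2.1 k,
   fun k => t • p.2.2 k⟩

/-- The second complex structure `J(m, m′) = (−(m′)†, m†)` on `𝕄 = 𝕄_Ω ⊕ 𝕄_Ω̄`. -/
def Jmap (src tgt : E → Fin n) (bar : E → E) (Ω : E → Prop) [DecidablePred Ω]
    (v w : Fin n → ℕ)
    (hbs : ∀ h, src (bar h) = tgt h) (hbt : ∀ h, tgt (bar h) = src h)
    (q : Rep src tgt v w) : Rep src tgt v w :=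
  ⟨fun h => (-(eps Ω h)) • (Bbar src tgt bar v w hbs hbt q h)ᴴ,
   fun k => -((q.2.2 k)ᴴ),
   fun k => (q.2.1 k)ᴴ⟩

/-- The point `p_A(ℏ)` of `𝕄`: for `h ∈ Ω` the `h`-component is `B⁰_h + A_h − ℏ·(B⁰_{h̄})†` and
for `h ∈ Ω̄` it is `ℏ⁻¹·(B⁰_h + A_h) + (B⁰_{h̄})†`; the `i`-components are
`i⁰_k + I_k − ℏ·(j⁰_k)†` and the `j`-components are `ℏ⁻¹·(j⁰_k + J_k) + (i⁰_k)†`. -/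
def pA (src tgt : E → Fin n) (bar : E → E) (Ω : E → Prop) [DecidablePred Ω]
    (v w : Fin n → ℕ)
    (hbs : ∀ h, src (bar h) = tgt h) (hbt : ∀ h, tgt (bar h) = src h)
    (p0 A : Rep src tgt v w) (ℏ : ℂ) : Rep src tgt v w :=
  ⟨fun h => if Ω h
      then p0.1 h + A.1 h - ℏ • (Bbar src tgt bar v w hbs hbt p0 h)ᴴ
      else ℏ⁻¹ • (p0.1 h + A.1 h) + (Bbar src tgt bar v w hbs hbt p0 h)ᴴ,
   fun k => p0.2.1 k + A.2.1 k - ℏ • (p0.2.2 k)ᴴ,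
   fun k => ℏ⁻¹ • (p0.2.2 k + A.2.2 k) + (p0.2.1 k)ᴴ⟩

/-- The linearization of the real moment map equation:
`ℒ(p,ξ)_k = Σ_{in(h)=k} [B_h(B_h† ξ_{in(h)} − ξ_{out(h)} B_h†) −
(B_{h̄}† ξ_{out(h)} − ξ_{in(h)} B_{h̄}†) B_{h̄}] + i_k i_k† ξ_k + ξ_k j_k† j_k`. -/
def linL [Fintype E] (src tgt : E → Fin n) (bar : E → E) (v w : Fin n → ℕ)
    (hbs : ∀ h, src (bar h) = tgt h) (hbt : ∀ h, tgt (bar h) = src h)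
    (p : Rep src tgt v w) (ξ : ∀ k : Fin n, Matrix (Fin (v k)) (Fin (v k)) ℂ)
    (k : Fin n) : Matrix (Fin (v k)) (Fin (v k)) ℂ :=
  (∑ h : E, if e : tgt h = k then
      castM2 v e e
        (p.1 h * ((p.1 h)ᴴ * ξ (tgt h) - ξ (src h) * (p.1 h)ᴴ)
          - ((Bbar src tgt bar v w hbs hbt p h)ᴴ * ξ (src h)
              - ξ (tgt h) * (Bbar src tgt bar v w hbs hbt p h)ᴴ)
            * Bbar src tgt bar v w hbs hbt p h)
    else 0)
    + (p.2.1 k * (p.2.1 k)ᴴ * ξ k + ξ k * (p.2.2 k)ᴴ * p.2.2 k)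

/-- The product of the matrices of `p` along a list of edges `[h_1, …, h_m]`, as a matrix
`V_a → V_b`; when the list is a path with `a = out(h_1)` and `b = in(h_m)` this is the genuine
composite `B_{h_m} ⋯ B_{h_1}`. -/
def prodAlong (src tgt : E → Fin n) (v w : Fin n → ℕ) (p : Rep src tgt v w) :
    List E → (a : Fin n) → (b : Fin n) → Matrix (Fin (v b)) (Fin (v a)) ℂ
  | [], a, b => if e : a = b then castM2 v e rfl (1 : Matrix (Fin (v a)) (Fin (v a)) ℂ) else 0
  | (h : E) :: rest, a, b =>
      prodAlong src tgt v w p rest (tgt h) b *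
        (if e : src h = a then castM2 v rfl e (p.1 h) else 0)


/-! ### Auxiliary lemmas -/

section Aux

lemma castM2_rfl {v : Fin n → ℕ} {a b : Fin n} (M : Matrix (Fin (v a)) (Fin (v b)) ℂ) :
    castM2 v rfl rfl M = M := by simp [castM2]

lemma castM2_add {v : Fin n → ℕ} {a b a' b' : Fin n} (ea : a = a') (eb : b = b')
    (M N : Matrix (Fin (v a)) (Fin (v b)) ℂ) :
    castM2 v ea eb (M + N) = castM2 v ea eb M + castM2 v ea eb N := by
  subst ea; subst eb; simp [castM2_rfl]

lemma castM2_smul {v : Fin n → ℕ} {a b a' b' : Fin n} (ea : a = a') (eb : b = b') (t : ℂ)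
    (M : Matrix (Fin (v a)) (Fin (v b)) ℂ) :
    castM2 v ea eb (t • M) = t • castM2 v ea eb M := by
  subst ea; subst eb; simp [castM2_rfl]

/-- Casting a conjugation `g_a * X * (g_b)⁻¹` along vertex equalities. -/
lemma castM2_conj2 {v : Fin n → ℕ} {a b a' b' : Fin n} (ea : a = a') (eb : b = b')
    (g : ∀ k : Fin n, Matrix (Fin (v k)) (Fin (v k)) ℂ)
    (X : Matrix (Fin (v a)) (Fin (v b)) ℂ) :
    castM2 v ea eb (g a * X * (g b)⁻¹) = g a' * castM2 v ea eb X * (g b')⁻¹ := by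
  subst ea; subst eb; simp [castM2_rfl]

lemma castM2_smul_conj2 {v : Fin n → ℕ} {a b a' b' : Fin n} (ea : a = a') (eb : b = b')
    (t : ℂ) (g : ∀ k : Fin n, Matrix (Fin (v k)) (Fin (v k)) ℂ)
    (X : Matrix (Fin (v a)) (Fin (v b)) ℂ) :
    castM2 v ea eb (t • (g a * X * (g b)⁻¹)) = t • (g a' * castM2 v ea eb X * (g b')⁻¹) := by
  subst ea; subst eb; simp [castM2_rfl]

variable {p q r : ℕ}

lemma sandwich (a : Matrix (Fin p) (Fin p) ℂ) (x : Matrix (Fin p) (Fin q) ℂ)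
    (b b' : Matrix (Fin q) (Fin q) ℂ) (y : Matrix (Fin q) (Fin r) ℂ)
    (c : Matrix (Fin r) (Fin r) ℂ) (hb : b * b' = 1) :
    (a * x * b) * (b' * y * c) = a * (x * y) * c := by
  simp only [Matrix.mul_assoc]
  rw [← Matrix.mul_assoc b b', hb, Matrix.one_mul]

lemma fixL1 (gt : Matrix (Fin p) (Fin p) ℂ) (gs : Matrix (Fin q) (Fin q) ℂ)
    (B : Matrix (Fin p) (Fin q) ℂ) (hgt : gt * gt⁻¹ = 1)
    (hgtH : gtᴴ = gt) (hgsH : (gs⁻¹)ᴴ = gs⁻¹)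
    (h : gt * B * gs⁻¹ = B) : gs⁻¹ * Bᴴ = Bᴴ * gt⁻¹ := by
  have h2 := congrArg conjTranspose h
  simp only [conjTranspose_mul, hgtH, hgsH, ← Matrix.mul_assoc] at h2
  have := congrArg (· * gt⁻¹) h2
  simpa [Matrix.mul_assoc, hgt] using this

lemma fixL2 (R : ℝ) (gt : Matrix (Fin p) (Fin p) ℂ) (gs : Matrix (Fin q) (Fin q) ℂ)
    (Bb : Matrix (Fin q) (Fin p) ℂ) (hgt : gt * gt⁻¹ = 1)
    (hgtH : (gt⁻¹)ᴴ = gt⁻¹) (hgsH : gsᴴ = gs)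
    (h : (R:ℂ) • (gs * Bb * gt⁻¹) = Bb) : (R:ℂ) • (Bbᴴ * gs) = gt * Bbᴴ := by
  have h2 := congrArg conjTranspose h
  simp only [conjTranspose_smul, conjTranspose_mul, hgtH, hgsH, Complex.star_def,
    Complex.conj_ofReal, ← Matrix.mul_assoc] at h2
  have := congrArg (gt * ·) h2
  simp only [Matrix.mul_smul, ← Matrix.mul_assoc, hgt, Matrix.one_mul] at this
  exact this

lemma fixL3 (R : ℝ) (gt : Matrix (Fin p) (Fin p) ℂ) (gs : Matrix (Fin q) (Fin q) ℂ)
    (B : Matrix (Fin p) (Fin q) ℂ) (hgt : gt * gt⁻¹ = 1)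
    (hgtH : gtᴴ = gt) (hgsH : (gs⁻¹)ᴴ = gs⁻¹)
    (h : (R:ℂ) • (gt * B * gs⁻¹) = B) : (R:ℂ) • (gs⁻¹ * Bᴴ) = Bᴴ * gt⁻¹ := by
  have h2 := congrArg conjTranspose h
  simp only [conjTranspose_smul, conjTranspose_mul, hgtH, hgsH, Complex.star_def,
    Complex.conj_ofReal, ← Matrix.mul_assoc] at h2
  have := congrArg (· * gt⁻¹) h2
  simp only [Matrix.smul_mul, Matrix.mul_assoc, hgt, Matrix.mul_one] at this
  simpa [Matrix.mul_assoc] using this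

lemma fixL4 (gt : Matrix (Fin p) (Fin p) ℂ) (gs : Matrix (Fin q) (Fin q) ℂ)
    (Bb : Matrix (Fin q) (Fin p) ℂ) (hgt : gt * gt⁻¹ = 1)
    (hgtH : (gt⁻¹)ᴴ = gt⁻¹) (hgsH : gsᴴ = gs)
    (h : gs * Bb * gt⁻¹ = Bb) : Bbᴴ * gs = gt * Bbᴴ := by
  have h2 := congrArg conjTranspose h
  simp only [conjTranspose_mul, hgtH, hgsH, ← Matrix.mul_assoc] at h2
  have := congrArg (gt * ·) h2
  simp only [← Matrix.mul_assoc, hgt, Matrix.one_mul] at this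
  exact this

lemma fixL5 (g : Matrix (Fin p) (Fin p) ℂ) (i : Matrix (Fin p) (Fin q) ℂ)
    (hg : g * g⁻¹ = 1) (hgH : gᴴ = g) (h : g * i = i) : iᴴ * g⁻¹ = iᴴ := by
  have h2 := congrArg conjTranspose h
  simp only [conjTranspose_mul, hgH] at h2
  conv_lhs => rw [← h2]
  rw [Matrix.mul_assoc, hg, Matrix.mul_one]

lemma fixL6 (R : ℝ) (g : Matrix (Fin p) (Fin p) ℂ) (j : Matrix (Fin q) (Fin p) ℂ)
    (hg : g * g⁻¹ = 1) (hgH : (g⁻¹)ᴴ = g⁻¹) (h : (R:ℂ) • (j * g⁻¹) = j) :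
    (R:ℂ) • jᴴ = g * jᴴ := by
  have h2 := congrArg conjTranspose h
  simp only [conjTranspose_smul, conjTranspose_mul, hgH, Complex.star_def,
    Complex.conj_ofReal] at h2
  have := congrArg (g * ·) h2
  simp only [Matrix.mul_smul, ← Matrix.mul_assoc, hg, Matrix.one_mul] at this
  exact this

lemma lpterm_pos (gt : Matrix (Fin p) (Fin p) ℂ) (gs : Matrix (Fin q) (Fin q) ℂ)
    (A0 B0 : Matrix (Fin p) (Fin q) ℂ) (Bb0 BbA : Matrix (Fin q) (Fin p) ℂ) (R : ℂ)
    (h1 : gs⁻¹ * B0ᴴ = B0ᴴ * gt⁻¹)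
    (h2 : R • (Bb0ᴴ * gs) = gt * Bb0ᴴ) :
    (gt * A0 * gs⁻¹) * B0ᴴ - Bb0ᴴ * (gs * (R • BbA) * gt⁻¹)
      = gt * (A0 * B0ᴴ - Bb0ᴴ * BbA) * gt⁻¹ := by
  have e1 : (gt * A0 * gs⁻¹) * B0ᴴ = gt * (A0 * B0ᴴ) * gt⁻¹ := by
    rw [Matrix.mul_assoc (gt * A0), h1, ← Matrix.mul_assoc, Matrix.mul_assoc gt A0]
  have e2 : Bb0ᴴ * (gs * (R • BbA) * gt⁻¹) = gt * (Bb0ᴴ * BbA) * gt⁻¹ := by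
    have : Bb0ᴴ * (gs * (R • BbA) * gt⁻¹) = (R • (Bb0ᴴ * gs)) * BbA * gt⁻¹ := by
      simp only [Matrix.mul_smul, Matrix.smul_mul, Matrix.mul_assoc]
    rw [this, h2]; simp only [Matrix.mul_assoc]
  rw [e1, e2, ← Matrix.sub_mul, ← Matrix.mul_sub]

lemma lpterm_neg (gt : Matrix (Fin p) (Fin p) ℂ) (gs : Matrix (Fin q) (Fin q) ℂ)
    (A0 B0 : Matrix (Fin p) (Fin q) ℂ) (Bb0 BbA : Matrix (Fin q) (Fin p) ℂ) (R : ℂ)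
    (h1 : R • (gs⁻¹ * B0ᴴ) = B0ᴴ * gt⁻¹)
    (h2 : Bb0ᴴ * gs = gt * Bb0ᴴ) :
    (gt * (R • A0) * gs⁻¹) * B0ᴴ - Bb0ᴴ * (gs * BbA * gt⁻¹)
      = gt * (A0 * B0ᴴ - Bb0ᴴ * BbA) * gt⁻¹ := by
  have e1 : (gt * (R • A0) * gs⁻¹) * B0ᴴ = gt * (A0 * B0ᴴ) * gt⁻¹ := by
    have : (gt * (R • A0) * gs⁻¹) * B0ᴴ = gt * A0 * (R • (gs⁻¹ * B0ᴴ)) := by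
      simp only [Matrix.mul_smul, Matrix.smul_mul, Matrix.mul_assoc]
    rw [this, h1, ← Matrix.mul_assoc, Matrix.mul_assoc gt A0]
  have e2 : Bb0ᴴ * (gs * BbA * gt⁻¹) = gt * (Bb0ᴴ * BbA) * gt⁻¹ := by
    rw [← Matrix.mul_assoc, ← Matrix.mul_assoc, h2, Matrix.mul_assoc gt Bb0ᴴ BbA]
  rw [e1, e2, ← Matrix.sub_mul, ← Matrix.mul_sub]

lemma lpterm_ij (g : Matrix (Fin p) (Fin p) ℂ) (i0 I : Matrix (Fin p) (Fin q) ℂ)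
    (j0 J : Matrix (Fin q) (Fin p) ℂ) (R : ℂ)
    (h1 : i0ᴴ * g⁻¹ = i0ᴴ) (h2 : R • j0ᴴ = g * j0ᴴ) :
    (g * I) * i0ᴴ - j0ᴴ * ((R • J) * g⁻¹) = g * (I * i0ᴴ - j0ᴴ * J) * g⁻¹ := by
  have e1 : (g * I) * i0ᴴ = g * (I * i0ᴴ) * g⁻¹ := by
    conv_lhs => rw [← h1]
    simp only [Matrix.mul_assoc]
  have e2 : j0ᴴ * ((R • J) * g⁻¹) = g * (j0ᴴ * J) * g⁻¹ := by
    have : j0ᴴ * ((R • J) * g⁻¹) = (R • j0ᴴ) * J * g⁻¹ := by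
      simp only [Matrix.mul_smul, Matrix.smul_mul, Matrix.mul_assoc]
    rw [this, h2]; simp only [Matrix.mul_assoc]
  rw [e1, e2, ← Matrix.sub_mul, ← Matrix.mul_sub]

end Aux

section AuxQuiver

variable (src tgt : E → Fin n) (bar : E → E) (Ω : E → Prop) [DecidablePred Ω]
  (v w : Fin n → ℕ)
  (hbs : ∀ h, src (bar h) = tgt h) (hbt : ∀ h, tgt (bar h) = src h)

lemma Bbar_gauge (g : ∀ k : Fin n, Matrix (Fin (v k)) (Fin (v k)) ℂ)
    (p : Rep src tgt v w) (h : E) :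
    Bbar src tgt bar v w hbs hbt (gauge src tgt v w g p) h
      = g (src h) * Bbar src tgt bar v w hbs hbt p h * (g (tgt h))⁻¹ := by
  unfold Bbar gauge
  exact castM2_conj2 (hbt h) (hbs h) g (p.1 (bar h))

lemma Bbar_scale (hor : ∀ h, Ω (bar h) ↔ ¬ Ω h) (t : ℂ)
    (p : Rep src tgt v w) (h : E) :
    Bbar src tgt bar v w hbs hbt (scale src tgt Ω v w t p) h
      = if Ω h then t • Bbar src tgt bar v w hbs hbt p h
        else Bbar src tgt bar v w hbs hbt p h := by
  unfold Bbar scale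
  by_cases hh : Ω h
  · have : ¬ Ω (bar h) := by rw [hor]; simpa using hh
    simp only [hh, if_true, this, if_false, castM2_smul]
  · have : Ω (bar h) := by rw [hor]; exact hh
    simp only [hh, if_false, this, if_true]

lemma Bbar_add (p q : Rep src tgt v w) (h : E) :
    Bbar src tgt bar v w hbs hbt (p + q) h
      = Bbar src tgt bar v w hbs hbt p h + Bbar src tgt bar v w hbs hbt q h := by
  unfold Bbar
  have : (p + q).1 (bar h) = p.1 (bar h) + q.1 (bar h) := rfl
  rw [this, castM2_add]

end AuxQuiver


section Main

variable {src tgt : E → Fin n} {bar : E → E} {Ω : E → Prop} [DecidablePred Ω]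
  {v w : Fin n → ℕ}
  {hbs : ∀ h, src (bar h) = tgt h} {hbt : ∀ h, tgt (bar h) = src h}

lemma muC_gauge_scale [Fintype E] (hor : ∀ h, Ω (bar h) ↔ ¬ Ω h)
    (g : ∀ k : Fin n, Matrix (Fin (v k)) (Fin (v k)) ℂ)
    (hg' : ∀ k, (g k)⁻¹ * g k = 1) (t : ℂ) (p : Rep src tgt v w) (k : Fin n) :
    muC src tgt bar Ω v w hbs hbt (gauge src tgt v w g (scale src tgt Ω v w t p)) k
      = t • (g k * muC src tgt bar Ω v w hbs hbt p k * (g k)⁻¹) := by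
  have hsum : ∀ h : E,
      (if e : tgt h = k then eps Ω h • castM2 v e e
          ((gauge src tgt v w g (scale src tgt Ω v w t p)).1 h *
            Bbar src tgt bar v w hbs hbt (gauge src tgt v w g (scale src tgt Ω v w t p)) h)
        else 0)
      = t • (g k * (if e : tgt h = k then eps Ω h • castM2 v e e
          (p.1 h * Bbar src tgt bar v w hbs hbt p h) else 0) * (g k)⁻¹) := by
    intro h
    by_cases e : tgt h = k
    · rw [dif_pos e, dif_pos e]
      have hq1 : (gauge src tgt v w g (scale src tgt Ω v w t p)).1 h
          = g (tgt h) * (scale src tgt Ω v w t p).1 h * (g (src h))⁻¹ := rfl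
      rw [hq1, Bbar_gauge src tgt bar v w hbs hbt g,
        sandwich _ _ _ _ _ _ (hg' (src h))]
      have hin : (scale src tgt Ω v w t p).1 h *
          Bbar src tgt bar v w hbs hbt (scale src tgt Ω v w t p) h
          = t • (p.1 h * Bbar src tgt bar v w hbs hbt p h) := by
        rw [Bbar_scale src tgt bar Ω v w hbs hbt hor t p h]
        by_cases hh : Ω h
        · simp [scale, hh, Matrix.mul_smul]
        · simp [scale, hh, Matrix.smul_mul]
      have hmove : g (tgt h) * (t • (p.1 h * Bbar src tgt bar v w hbs hbt p h)) *
          (g (tgt h))⁻¹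
          = t • (g (tgt h) * (p.1 h * Bbar src tgt bar v w hbs hbt p h) * (g (tgt h))⁻¹) := by
        simp [Matrix.mul_smul, Matrix.smul_mul]
      rw [hin, hmove, castM2_smul, castM2_conj2 e e g, smul_comm (eps Ω h) t]
      congr 1
      simp [Matrix.mul_smul, Matrix.smul_mul]
    · rw [dif_neg e, dif_neg e]; simp
  have hij : (gauge src tgt v w g (scale src tgt Ω v w t p)).2.1 k *
      (gauge src tgt v w g (scale src tgt Ω v w t p)).2.2 k
      = t • (g k * (p.2.1 k * p.2.2 k) * (g k)⁻¹) := by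
    show (g k * p.2.1 k) * ((t • p.2.2 k) * (g k)⁻¹) = _
    simp only [Matrix.mul_smul, Matrix.smul_mul, Matrix.mul_assoc]
  unfold muC
  rw [Finset.sum_congr rfl (fun h _ => hsum h), hij]
  simp only [Matrix.mul_add, Matrix.add_mul, smul_add, Finset.mul_sum, Finset.sum_mul,
    Finset.smul_sum]

lemma point_eq (hor : ∀ h, Ω (bar h) ↔ ¬ Ω h)
    (p0 A : Rep src tgt v w) (R : ℝ)
    (g : ∀ k : Fin n, Matrix (Fin (v k)) (Fin (v k)) ℂ)
    (hfixB : ∀ h, Ω h → g (tgt h) * p0.1 h * (g (src h))⁻¹ = p0.1 h)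
    (hfixBbar : ∀ h, ¬ Ω h → (R : ℂ) • (g (tgt h) * p0.1 h * (g (src h))⁻¹) = p0.1 h)
    (hfixi : ∀ k, g k * p0.2.1 k = p0.2.1 k)
    (hfixj : ∀ k, (R : ℂ) • (p0.2.2 k * (g k)⁻¹) = p0.2.2 k) :
    p0 + gauge src tgt v w g (scale src tgt Ω v w (R : ℂ) A)
      = gauge src tgt v w g (scale src tgt Ω v w (R : ℂ) (p0 + A)) := by
  refine Prod.ext ?_ (Prod.ext ?_ ?_)
  · funext h
    show p0.1 h + g (tgt h) * (scale src tgt Ω v w (R:ℂ) A).1 h * (g (src h))⁻¹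
        = g (tgt h) * (scale src tgt Ω v w (R:ℂ) (p0 + A)).1 h * (g (src h))⁻¹
    have hadd : (p0 + A).1 h = p0.1 h + A.1 h := rfl
    by_cases hh : Ω h
    · simp only [scale, hh, if_true, hadd]
      rw [Matrix.mul_add, Matrix.add_mul, hfixB h hh]
    · simp only [scale, hh, if_false, hadd]
      rw [smul_add, Matrix.mul_add, Matrix.add_mul]
      congr 1
      conv_lhs => rw [← hfixBbar h hh]
      simp [Matrix.mul_smul, Matrix.smul_mul]
  · funext k
    show p0.2.1 k + g k * A.2.1 k = g k * (p0.2.1 k + A.2.1 k)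
    rw [Matrix.mul_add, hfixi k]
  · funext k
    show p0.2.2 k + ((R:ℂ) • A.2.2 k) * (g k)⁻¹
        = ((R:ℂ) • (p0.2.2 k + A.2.2 k)) * (g k)⁻¹
    rw [smul_add, Matrix.add_mul]
    congr 1
    conv_lhs => rw [← hfixj k]
    simp [Matrix.smul_mul]

lemma lpStar_conj [Fintype E] (hor : ∀ h, Ω (bar h) ↔ ¬ Ω h)
    (p0 A : Rep src tgt v w) (R : ℝ)
    (g : ∀ k : Fin n, Matrix (Fin (v k)) (Fin (v k)) ℂ)
    (hgsa : ∀ k, (g k)ᴴ = g k)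
    (hg : ∀ k, g k * (g k)⁻¹ = 1)
    (hfixB : ∀ h, Ω h → g (tgt h) * p0.1 h * (g (src h))⁻¹ = p0.1 h)
    (hfixBbar : ∀ h, ¬ Ω h → (R : ℂ) • (g (tgt h) * p0.1 h * (g (src h))⁻¹) = p0.1 h)
    (hfixi : ∀ k, g k * p0.2.1 k = p0.2.1 k)
    (hfixj : ∀ k, (R : ℂ) • (p0.2.2 k * (g k)⁻¹) = p0.2.2 k)
    (k : Fin n) :
    lpStar src tgt bar v w hbs hbt p0 (gauge src tgt v w g (scale src tgt Ω v w (R:ℂ) A)) k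
      = g k * lpStar src tgt bar v w hbs hbt p0 A k * (g k)⁻¹ := by
  have hinvH : ∀ k, ((g k)⁻¹)ᴴ = (g k)⁻¹ := fun k => by
    rw [Matrix.conjTranspose_nonsing_inv, hgsa]
  -- fixed-point conditions transported through `Bbar`
  have hfixBb_pos : ∀ h : E, Ω h →
      (R:ℂ) • (g (src h) * Bbar src tgt bar v w hbs hbt p0 h * (g (tgt h))⁻¹)
        = Bbar src tgt bar v w hbs hbt p0 h := by
    intro h hh
    have hbn : ¬ Ω (bar h) := by rw [hor]; simpa using hh
    have := congrArg (castM2 v (hbt h) (hbs h)) (hfixBbar (bar h) hbn)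
    rwa [castM2_smul_conj2 (hbt h) (hbs h)] at this
  have hfixBb_neg : ∀ h : E, ¬ Ω h →
      g (src h) * Bbar src tgt bar v w hbs hbt p0 h * (g (tgt h))⁻¹
        = Bbar src tgt bar v w hbs hbt p0 h := by
    intro h hh
    have hbp : Ω (bar h) := by rw [hor]; exact hh
    have := congrArg (castM2 v (hbt h) (hbs h)) (hfixB (bar h) hbp)
    rwa [castM2_conj2 (hbt h) (hbs h)] at this
  have hsum : ∀ h : E,
      (if e : tgt h = k then castM2 v e e
          ((gauge src tgt v w g (scale src tgt Ω v w (R:ℂ) A)).1 h * (p0.1 h)ᴴ -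
            (Bbar src tgt bar v w hbs hbt p0 h)ᴴ *
              Bbar src tgt bar v w hbs hbt (gauge src tgt v w g (scale src tgt Ω v w (R:ℂ) A)) h)
        else 0)
      = g k * (if e : tgt h = k then castM2 v e e
          (A.1 h * (p0.1 h)ᴴ -
            (Bbar src tgt bar v w hbs hbt p0 h)ᴴ * Bbar src tgt bar v w hbs hbt A h)
        else 0) * (g k)⁻¹ := by
    intro h
    by_cases e : tgt h = k
    · rw [dif_pos e, dif_pos e]
      have hq1 : (gauge src tgt v w g (scale src tgt Ω v w (R:ℂ) A)).1 h
          = g (tgt h) * (scale src tgt Ω v w (R:ℂ) A).1 h * (g (src h))⁻¹ := rfl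
      rw [hq1, Bbar_gauge src tgt bar v w hbs hbt g,
        Bbar_scale src tgt bar Ω v w hbs hbt hor]
      have hinner : g (tgt h) * (scale src tgt Ω v w (R:ℂ) A).1 h * (g (src h))⁻¹ *
            (p0.1 h)ᴴ -
          (Bbar src tgt bar v w hbs hbt p0 h)ᴴ *
            (g (src h) *
              (if Ω h then (R:ℂ) • Bbar src tgt bar v w hbs hbt A h
                else Bbar src tgt bar v w hbs hbt A h) * (g (tgt h))⁻¹)
          = g (tgt h) * (A.1 h * (p0.1 h)ᴴ -
              (Bbar src tgt bar v w hbs hbt p0 h)ᴴ * Bbar src tgt bar v w hbs hbt A h) *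
            (g (tgt h))⁻¹ := by
        by_cases hh : Ω h
        · have hs1 : (scale src tgt Ω v w (R:ℂ) A).1 h = A.1 h := by simp [scale, hh]
          rw [hs1, if_pos hh]
          exact lpterm_pos _ _ _ _ _ _ _
            (fixL1 (g (tgt h)) (g (src h)) (p0.1 h) (hg _) (hgsa _) (hinvH _) (hfixB h hh))
            (fixL2 R (g (tgt h)) (g (src h)) (Bbar src tgt bar v w hbs hbt p0 h)
              (hg _) (hinvH _) (hgsa _) (hfixBb_pos h hh))
        · have hs1 : (scale src tgt Ω v w (R:ℂ) A).1 h = (R:ℂ) • A.1 h := by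
            simp [scale, hh]
          rw [hs1, if_neg hh]
          exact lpterm_neg _ _ _ _ _ _ _
            (fixL3 R (g (tgt h)) (g (src h)) (p0.1 h) (hg _) (hgsa _) (hinvH _)
              (hfixBbar h hh))
            (fixL4 (g (tgt h)) (g (src h)) (Bbar src tgt bar v w hbs hbt p0 h)
              (hg _) (hinvH _) (hgsa _) (hfixBb_neg h hh))
      rw [hinner, castM2_conj2 e e g]
    · rw [dif_neg e, dif_neg e]; simp
  have hij : (gauge src tgt v w g (scale src tgt Ω v w (R:ℂ) A)).2.1 k * (p0.2.1 k)ᴴ -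
      (p0.2.2 k)ᴴ * (gauge src tgt v w g (scale src tgt Ω v w (R:ℂ) A)).2.2 k
      = g k * (A.2.1 k * (p0.2.1 k)ᴴ - (p0.2.2 k)ᴴ * A.2.2 k) * (g k)⁻¹ := by
    show (g k * A.2.1 k) * (p0.2.1 k)ᴴ -
        (p0.2.2 k)ᴴ * (((R:ℂ) • A.2.2 k) * (g k)⁻¹) = _
    exact lpterm_ij _ _ _ _ _ _
      (fixL5 (g k) (p0.2.1 k) (hg k) (hgsa k) (hfixi k))
      (fixL6 R (g k) (p0.2.2 k) (hg k) (hinvH k) (hfixj k))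
  unfold lpStar
  rw [Finset.sum_congr rfl (fun h _ => hsum h), hij]
  simp only [Matrix.mul_add, Matrix.add_mul, Finset.mul_sum, Finset.sum_mul]

end Main

/-- if `p_0` is fixed (up to the self-adjoint invertible gauge `g`) by the
`R`-scaling, and `A` satisfies `μ_ℂ(p_0 + A) = 0` and `l_{p_0}^*(A) = 0`, then
`A_R = g·(A_h, I_k, R·A_{h̄}, R·J_k)` satisfies `μ_ℂ(p_0 + A_R) = 0` and `l_{p_0}^*(A_R) = 0`. -/
theorem BB_slice_scaling {n : ℕ} {E : Type*} [Fintype E]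
    (src tgt : E → Fin n) (bar : E → E) (Ω : E → Prop) [DecidablePred Ω]
    (v w : Fin n → ℕ)
    (hloop : ∀ h, src h ≠ tgt h)
    (hinv : ∀ h, bar (bar h) = h) (hfree : ∀ h, bar h ≠ h)
    (hbs : ∀ h, src (bar h) = tgt h) (hbt : ∀ h, tgt (bar h) = src h)
    (hor : ∀ h, Ω (bar h) ↔ ¬ Ω h)
    (p0 A : Rep src tgt v w) (R : ℝ) (hR : 0 < R)
    (g : ∀ k : Fin n, Matrix (Fin (v k)) (Fin (v k)) ℂ)
    (hgsa : ∀ k, (g k)ᴴ = g k) (hginv : ∀ k, IsUnit (g k))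
    (hfixB : ∀ h, Ω h → g (tgt h) * p0.1 h * (g (src h))⁻¹ = p0.1 h)
    (hfixBbar : ∀ h, ¬ Ω h → (R : ℂ) • (g (tgt h) * p0.1 h * (g (src h))⁻¹) = p0.1 h)
    (hfixi : ∀ k, g k * p0.2.1 k = p0.2.1 k)
    (hfixj : ∀ k, (R : ℂ) • (p0.2.2 k * (g k)⁻¹) = p0.2.2 k)
    (hA1 : ∀ k, muC src tgt bar Ω v w hbs hbt (p0 + A) k = 0)
    (hA2 : ∀ k, lpStar src tgt bar v w hbs hbt p0 A k = 0) :
    (∀ k, muC src tgt bar Ω v w hbs hbt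
        (p0 + gauge src tgt v w g (scale src tgt Ω v w (R : ℂ) A)) k = 0)
    ∧ (∀ k, lpStar src tgt bar v w hbs hbt p0
        (gauge src tgt v w g (scale src tgt Ω v w (R : ℂ) A)) k = 0) := by
  have hg : ∀ k, g k * (g k)⁻¹ = 1 := fun k =>
    Matrix.mul_nonsing_inv _ ((Matrix.isUnit_iff_isUnit_det _).mp (hginv k))
  have hg' : ∀ k, (g k)⁻¹ * g k = 1 := fun k =>
    Matrix.nonsing_inv_mul _ ((Matrix.isUnit_iff_isUnit_det _).mp (hginv k))
  constructor
  · intro k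
    rw [point_eq hor p0 A R g hfixB hfixBbar hfixi hfixj,
      muC_gauge_scale hor g hg' ((R:ℂ)) (p0 + A) k, hA1 k]
    simp
  · intro k
    rw [lpStar_conj hor p0 A R g hgsa hg hfixB hfixBbar hfixi hfixj k, hA2 k]
    simp

end

end QuiverCL
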